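/- (Generalized Pythagorean Theorem) Let x ∈ 𝐇, and let y, z ∈ ℝ³ satisfy z ∗ z = −1, y ∗ y = 1 or y ∗ y = −1, with neither y nor z a scalar multiple of x. If the angle at x is a right angle, i.e., t_x(z) ∗ t_x(y) = 0, then −(z ∗ y) = (z ∗ x)(x ∗ y). -/

import Mathlib

noncomputable section

/-- The Lorentzian inner product `u ∗ v = u₁v₁ + u₂v₂ − u₃v₃` on ℝ³. -/
def lor (u v : Fin 3 → ℝ) : ℝ := u 0 * v 0 + u 1 * v 1 - u 2 * v 2

/-- The hyperboloid model of the hyperbolic plane. -/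
def Hyp : Set (Fin 3 → ℝ) := {u | lor u u = -1 ∧ 0 < u 2}

/-- The Lorentzian cross product `u ⊗ v = J (u × v)`, `J = diag(1,1,−1)`. -/
def lcross (u v : Fin 3 → ℝ) : Fin 3 → ℝ :=
  ![u 1 * v 2 - u 2 * v 1, u 2 * v 0 - u 0 * v 2, -(u 0 * v 1 - u 1 * v 0)]

/-- Lorentzian magnitude `‖w‖ = √(w ∗ w)` (for `w` with `w ∗ w ≥ 0`). -/
def lnorm (w : Fin 3 → ℝ) : ℝ := Real.sqrt (lor w w)

/-- The unit tangent vector at `p` toward `y`: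
`t_p(y) = (y + (p ∗ y)p)/√(y ∗ y + (p ∗ y)²)`. -/
def tang (p y : Fin 3 → ℝ) : Fin 3 → ℝ :=
  (Real.sqrt (lor y y + lor p y ^ 2))⁻¹ • (y + lor p y • p)

/-- Inverse hyperbolic cosine. -/
def arcosh (x : ℝ) : ℝ := Real.log (x + Real.sqrt (x ^ 2 - 1))

/-- Hyperbolic distance between points of the hyperboloid: `d(p,q) = arccosh(−p ∗ q)`. -/
def dHyp (p q : Fin 3 → ℝ) : ℝ := arcosh (-lor p q)

/-!
The unit tangents `t_x(y)`, `t_x(z)` are multiples of the projections `y + (x ∗ y) x` and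
`z + (x ∗ z) x` to the Lorentz-orthogonal complement of `x`, whose product is
`z ∗ y + (x ∗ z)(x ∗ y)`. The complement of a timelike vector is spacelike, so a normalising
factor `(√(u ∗ u))⁻¹` can only vanish when the projection `u` is itself zero; either way a right
angle forces that product to vanish.
-/

lemma lor_comm (u v : Fin 3 → ℝ) : lor u v = lor v u := by
  unfold lor; ring

lemma lor_add_left (u v w : Fin 3 → ℝ) : lor (u + v) w = lor u w + lor v w := by
  simp only [lor, Pi.add_apply]; ring

lemma lor_add_right (u v w : Fin 3 → ℝ) : lor u (v + w) = lor u v + lor u w := by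
  rw [lor_comm, lor_add_left, lor_comm v, lor_comm w]

lemma lor_smul_left (c : ℝ) (u v : Fin 3 → ℝ) : lor (c • u) v = c * lor u v := by
  simp only [lor, Pi.smul_apply, smul_eq_mul]; ring

lemma lor_smul_right (c : ℝ) (u v : Fin 3 → ℝ) : lor u (c • v) = c * lor u v := by
  rw [lor_comm, lor_smul_left, lor_comm]

lemma lor_zero_left (v : Fin 3 → ℝ) : lor 0 v = 0 := by
  simp [lor]

lemma lor_zero_right (u : Fin 3 → ℝ) : lor u 0 = 0 := by
  rw [lor_comm, lor_zero_left]

lemma eq_zero_of_lor_eq_zero_of_lor_self_nonpos {p w : Fin 3 → ℝ} (hp : lor p p < 0)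
    (hpw : lor p w = 0) (hw : lor w w ≤ 0) : w = 0 := by
  unfold lor at hp hpw hw
  have hcs : (p 2 * w 2) ^ 2 ≤ (p 0 ^ 2 + p 1 ^ 2) * (w 0 ^ 2 + w 1 ^ 2) := by
    rw [show p 2 * w 2 = p 0 * w 0 + p 1 * w 1 by linarith]
    nlinarith [sq_nonneg (p 0 * w 1 - p 1 * w 0)]
  have hw2 : w 2 = 0 := by
    by_contra h
    have : (p 0 ^ 2 + p 1 ^ 2) * (w 0 ^ 2 + w 1 ^ 2) < (p 2 * w 2) ^ 2 :=
      calc (p 0 ^ 2 + p 1 ^ 2) * (w 0 ^ 2 + w 1 ^ 2) ≤ (p 0 ^ 2 + p 1 ^ 2) * w 2 ^ 2 :=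
            mul_le_mul_of_nonneg_left (by linarith) (by positivity)
        _ < p 2 ^ 2 * w 2 ^ 2 := mul_lt_mul_of_pos_right (by linarith) (by positivity)
        _ = (p 2 * w 2) ^ 2 := by ring
    linarith
  have hw0 : w 0 = 0 := by nlinarith [sq_nonneg (w 0), sq_nonneg (w 1)]
  have hw1 : w 1 = 0 := by nlinarith [sq_nonneg (w 0), sq_nonneg (w 1)]
  ext i; fin_cases i <;> assumption

section OrthProj

variable {p : Fin 3 → ℝ}

def orthProj (p y : Fin 3 → ℝ) : Fin 3 → ℝ := y + lor p y • p

lemma lor_orthProj (hp : lor p p = -1) (y : Fin 3 → ℝ) : lor p (orthProj p y) = 0 := by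
  rw [orthProj, lor_add_right, lor_smul_right, hp]; ring

lemma lor_orthProj_orthProj (hp : lor p p = -1) (y z : Fin 3 → ℝ) :
    lor (orthProj p y) (orthProj p z) = lor y z + lor p y * lor p z := by
  rw [orthProj, lor_add_left, lor_smul_left, lor_orthProj hp, orthProj, lor_add_right,
    lor_smul_right, lor_comm y p]
  ring

lemma lor_tang_tang (p y z : Fin 3 → ℝ) :
    lor (tang p y) (tang p z) = (√(lor y y + lor p y ^ 2))⁻¹ * (√(lor z z + lor p z ^ 2))⁻¹ *
      lor (orthProj p y) (orthProj p z) := by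
  rw [tang, tang, orthProj, orthProj, lor_smul_left, lor_smul_right]; ring

lemma lor_orthProj_orthProj_eq_zero_of_lor_tang_eq_zero (hp : lor p p = -1) {y z : Fin 3 → ℝ}
    (h : lor (tang p y) (tang p z) = 0) : lor (orthProj p y) (orthProj p z) = 0 := by
  have orthProj_eq_zero : ∀ w : Fin 3 → ℝ, (√(lor w w + lor p w ^ 2))⁻¹ = 0 → orthProj p w = 0 := by
    intro w hw
    rw [inv_eq_zero, Real.sqrt_eq_zero', sq, ← lor_orthProj_orthProj hp] at hw
    exact eq_zero_of_lor_eq_zero_of_lor_self_nonpos (by linarith) (lor_orthProj hp w) hw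
  rw [lor_tang_tang] at h
  rcases mul_eq_zero.1 h with h | h
  · rcases mul_eq_zero.1 h with hy | hz
    · rw [orthProj_eq_zero y hy, lor_zero_left]
    · rw [orthProj_eq_zero z hz, lor_zero_right]
  · exact h

end OrthProj

theorem generalized_pythagorean_general
    (x y z : Fin 3 → ℝ) (hx : x ∈ Hyp)
    (hright : lor (tang x z) (tang x y) = 0) :
    -(lor z y) = lor z x * lor x y := by
  have h := lor_orthProj_orthProj_eq_zero_of_lor_tang_eq_zero hx.1 hright
  rw [lor_orthProj_orthProj hx.1] at h
  rw [lor_comm z x]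
  linarith

/-- The Generalized Pythagorean Theorem (Corollary 3.4): if the angle at `x` is right,
i.e., `t_x(z) ∗ t_x(y) = 0`, then `−(z ∗ y) = (z ∗ x)(x ∗ y)`. -/
theorem generalized_pythagorean
    (x y z : Fin 3 → ℝ) (hx : x ∈ Hyp)
    (hz : lor z z = -1) (hy : lor y y = 1 ∨ lor y y = -1)
    (hyx : ¬ ∃ t : ℝ, y = t • x) (hzx : ¬ ∃ t : ℝ, z = t • x)
    (hright : lor (tang x z) (tang x y) = 0) :
    -(lor z y) = lor z x * lor x y :=
  generalized_pythagorean_general x y z hx hright
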